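/- arXiv:1703.10416 — 6 statements merged into one kernel-verified Lean document; each statement's English description precedes it below -/
import Mathlib

section
/- Let $A$ be a commutative ring and let $\alpha_*, \gamma_*, \delta_*$ be the endomorphisms of $A^4$ (with basis $x_1, x_2, y_1, y_2$) given by: $\alpha_*(x_i) = -x_i$, $\alpha_*(y_i) = -y_i$; $\gamma_*(x_1) = -x_2$, $\gamma_*(x_2) = -x_1$, $\gamma_*(y_1) = -y_2$, $\gamma_*(y_2) = -y_1$; $\delta_*(x_1) = -x_1 + x_2$, $\delta_*(x_2) = -x_1$, $\delta_*(y_1) = y_2$, $\delta_*(y_2) = -y_1 - y_2$. Then the quotient of $A^4$ by the submodule generated by all elements $\phi(v) - v$ for $\phi \in \{\alpha_*, \gamma_*, \delta_*\}$ and $v \in A^4$ is the zero module. -/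
/-!
Since `α_* = -1`, the coinvariant submodule contains `2 • v` for every `v`. The matrix of
`δ_* - 1` has determinant `9`, which is odd, so `δ_* - 1` is invertible modulo `2` and its
image together with `2 • A⁴` is everything.
-/

open Matrix

theorem Submodule.eq_top_of_mulVec_mem_of_isCoprime_det {n A : Type*} [Fintype n]
    [DecidableEq n] [CommRing A] {S : Submodule A (n → A)} {N : Matrix n n A} {r : A}
    (hN : ∀ v, N *ᵥ v ∈ S) (hr : ∀ v, r • v ∈ S) (hcop : IsCoprime N.det r) : S = ⊤ := by
  obtain ⟨a, b, hab⟩ := hcop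
  refine S.eq_top_iff'.2 fun v => ?_
  have hdet : N.det • v = N *ᵥ (N.adjugate *ᵥ v) := by
    rw [mulVec_mulVec, mul_adjugate, smul_mulVec, one_mulVec]
  have hv : v = a • N.det • v + b • r • v := by
    rw [smul_smul, smul_smul, ← add_smul, hab, one_smul]
  rw [hv, hdet]
  exact S.add_mem (S.smul_mem a (hN _)) (S.smul_mem b (hr v))

theorem stmt_2_general (A : Type*) [CommRing A]
    (α γ δ : Module.End A (Fin 4 → A))
    (hα : α = (-(1 : Matrix (Fin 4) (Fin 4) A)).mulVecLin)
    (hδ : δ = (!![-1,-1,0,0; 1,0,0,0; 0,0,0,-1; 0,0,1,-1] : Matrix (Fin 4) (Fin 4) A).mulVecLin) :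
    Subsingleton ((Fin 4 → A) ⧸
      Submodule.span A {w : Fin 4 → A |
        ∃ φ ∈ ({α, γ, δ} : Set (Module.End A (Fin 4 → A))), ∃ v, w = φ v - v}) := by
  set S := Submodule.span A {w : Fin 4 → A |
    ∃ φ ∈ ({α, γ, δ} : Set (Module.End A (Fin 4 → A))), ∃ v, w = φ v - v}
  have mem : ∀ φ ∈ ({α, γ, δ} : Set (Module.End A (Fin 4 → A))), ∀ v, φ v - v ∈ S :=
    fun φ hφ v => Submodule.subset_span ⟨φ, hφ, v, rfl⟩
  have two_smul_mem : ∀ v, (2 : A) • v ∈ S := fun v => by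
    convert S.neg_mem (mem α (by simp) v) using 1
    subst hα
    simp only [mulVecLin_apply, neg_mulVec, one_mulVec]
    module
  let N : Matrix (Fin 4) (Fin 4) A := !![-2,-1,0,0; 1,-1,0,0; 0,0,-1,-1; 0,0,1,-2]
  have hN : ∀ v, N *ᵥ v ∈ S := fun v => by
    convert mem δ (by simp) v using 1
    have hNδ : N = !![-1,-1,0,0; 1,0,0,0; 0,0,0,-1; 0,0,1,-1] - 1 := by
      ext i j
      fin_cases i <;> fin_cases j <;> norm_num [N]
    rw [hNδ, sub_mulVec, one_mulVec, hδ, mulVecLin_apply]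
  have hdet : N.det = 9 := by
    simp [N, det_succ_row_zero, Fin.sum_univ_succ, Fin.succAbove]
    norm_num
  refine Submodule.Quotient.subsingleton_iff.2 <|
    Submodule.eq_top_of_mulVec_mem_of_isCoprime_det hN two_smul_mem ⟨1, -4, ?_⟩
  rw [hdet]
  norm_num

theorem stmt_2 (A : Type*) [CommRing A]
    (α γ δ : Module.End A (Fin 4 → A))
    (hα : α = (-(1 : Matrix (Fin 4) (Fin 4) A)).mulVecLin)
    (hγ : γ = (!![0,-1,0,0; -1,0,0,0; 0,0,0,-1; 0,0,-1,0] : Matrix (Fin 4) (Fin 4) A).mulVecLin)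
    (hδ : δ = (!![-1,-1,0,0; 1,0,0,0; 0,0,0,-1; 0,0,1,-1] : Matrix (Fin 4) (Fin 4) A).mulVecLin) :
    Subsingleton ((Fin 4 → A) ⧸
      Submodule.span A {w : Fin 4 → A |
        ∃ φ ∈ ({α, γ, δ} : Set (Module.End A (Fin 4 → A))), ∃ v, w = φ v - v}) :=
  stmt_2_general A α γ δ hα hδ
end

section
/- Let $A$ be a commutative ring, $\alpha_* = -\mathrm{id}$ on $A^4$, and $\delta_*(v_1,v_2,v_3,v_4) = (-v_1 - v_2, v_1, v_4, -v_3 + v_4)$ in coordinates (i.e., $\delta_*(x_1) = -x_1+x_2$, $\delta_*(x_2) = -x_1$, $\delta_*(y_1) = y_2$, $\delta_*(y_2) = -y_1-y_2$). If $d$ is a crossed homomorphism on a group with elements $a, e$ acting via $\alpha_*, \delta_*$ and satisfying $aea = e$, and $d(a) = (\omega_{11},\omega_{12},\omega_{13},\omega_{14})$, $d(e) = (\omega_{41},\omega_{42},\omega_{43},\omega_{44})$, then $2\omega_{11} + \omega_{12} = 2\omega_{41}$, $-\omega_{11} + \omega_{12} = 2\omega_{42}$, $\omega_{13} + \omega_{14}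 = 2\omega_{43}$, and $-\omega_{13} + 2\omega_{14} = 2\omega_{44}$. -/
theorem crossedHom_eq_of_mul_mul_eq {R M G : Type*} [Semiring R] [AddCommMonoid M] [Module R M]
    [Monoid G] (ρ : G →* Module.End R M) (d : G → M)
    (hd : ∀ g g' : G, d (g * g') = d g + ρ g (d g')) {a e : G} (hrel : a * e * a = e) :
    d a + ρ a (d e + ρ e (d a)) = d e := by
  rw [← hd e a, ← hd a, ← mul_assoc, hrel]

theorem sub_apply_eq_two_smul_of_mul_mul_eq {R M G : Type*} [Ring R] [AddCommGroup M]
    [Module R M] [Monoid G] (ρ : G →* Module.End R M) (d : G → M)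
    (hd : ∀ g g' : G, d (g * g') = d g + ρ g (d g')) {a e : G} (hρa : ρ a = -1)
    (hrel : a * e * a = e) :
    d a - ρ e (d a) = (2 : R) • d e := by
  have h := crossedHom_eq_of_mul_mul_eq ρ d hd hrel
  rw [hρa, LinearMap.neg_apply, Module.End.one_apply] at h
  rw [two_smul]
  nth_rewrite 1 [← h]
  abel

theorem delta_mulVec {A : Type*} [CommRing A] (x₁ x₂ y₁ y₂ : A) :
    (!![-1,-1,0,0; 1,0,0,0; 0,0,0,-1; 0,0,1,-1] : Matrix (Fin 4) (Fin 4) A).mulVec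
        ![x₁, x₂, y₁, y₂] =
      ![-x₁ - x₂, x₁, -y₂, y₁ - y₂] := by
  ext i
  fin_cases i <;> simp [Matrix.mulVec, dotProduct, Fin.sum_univ_four] <;> ring

theorem stmt_7 (A : Type*) [CommRing A] {G : Type*} [Group G]
    (ρ : G →* Module.End A (Fin 4 → A))
    (a e : G)
    (hρa : ρ a = (-(1 : Matrix (Fin 4) (Fin 4) A)).mulVecLin)
    (hρe : ρ e = (!![-1,-1,0,0; 1,0,0,0; 0,0,0,-1; 0,0,1,-1] :
      Matrix (Fin 4) (Fin 4) A).mulVecLin)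
    (hrel : a * e * a = e)
    (d : G → (Fin 4 → A))
    (hd : ∀ g g' : G, d (g * g') = d g + ρ g (d g'))
    (ω11 ω12 ω13 ω14 ω41 ω42 ω43 ω44 : A)
    (hda : d a = ![ω11, ω12, ω13, ω14])
    (hde : d e = ![ω41, ω42, ω43, ω44]) :
    2 * ω11 + ω12 = 2 * ω41 ∧ -ω11 + ω12 = 2 * ω42 ∧
    ω13 + ω14 = 2 * ω43 ∧ -ω13 + 2 * ω14 = 2 * ω44 := by
  have hρa' : ρ a = -1 := by
    rw [hρa]
    ext
    simp
  have key := sub_apply_eq_two_smul_of_mul_mul_eq ρ d hd hρa' hrel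
  rw [hda, hde, hρe, Matrix.mulVecLin_apply, delta_mulVec] at key
  simp only [Matrix.cons_sub_cons, Matrix.smul_cons, Matrix.empty_sub_empty, Matrix.smul_empty,
    Matrix.vecCons_inj, smul_eq_mul] at key
  obtain ⟨h₁, h₂, h₃, h₄, -⟩ := key
  exact ⟨by linear_combination h₁, by linear_combination h₂, by linear_combination h₃,
    by linear_combination h₄⟩
end

section
/- Let $A$ be a commutative ring, and let $\gamma_*, \delta_*$ act on $A^4$ by $\gamma_*(v) = (-v_2,-v_1,-v_4,-v_3)$ and $\delta_*(x_1) = -x_1+x_2$, $\delta_*(x_2) = -x_1$, $\delta_*(y_1) = y_2$, $\delta_*(y_2) = -y_1-y_2$. If $d$ is a crossed homomorphism on a group with elements $c, e$ acting via $\gamma_*, \delta_*$ and satisfying $ce^2c = e$, with $d(c) = (\omega_{3j})_j$ and $d(e) = (\omega_{4j})_j$, then $2\omega_{31} + \omega_{32} = 2\omega_{41} + \omega_{42}$ and $\omega_{33} = \omega_{43}$. -/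
/-! In coordinates, the relation `c e² c = e` turns into
`d(e) = d(c) + γ_* d(e) + γ_* δ_* d(e) + γ_* δ_*² d(c)`; its first and last coordinates are exactly
the two claimed identities. -/

theorem map_mul_mul_mul_of_crossedHom {R M G : Type*} [Semiring R] [AddCommMonoid M] [Module R M]
    [Monoid G] (ρ : G →* Module.End R M) (d : G → M)
    (hd : ∀ g g' : G, d (g * g') = d g + ρ g (d g')) (g₁ g₂ g₃ g₄ : G) :
    d (g₁ * g₂ * g₃ * g₄) = d g₁ + ρ g₁ (d g₂ + ρ g₂ (d g₃ + ρ g₃ (d g₄))) := by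
  rw [mul_assoc, mul_assoc, hd, hd, hd]

section

open Matrix

variable {A : Type*} [CommRing A] (v : Fin 4 → A)

theorem gammaStar_mulVec :
    (!![0,-1,0,0; -1,0,0,0; 0,0,0,-1; 0,0,-1,0] : Matrix (Fin 4) (Fin 4) A) *ᵥ v
      = ![-v 1, -v 0, -v 3, -v 2] := by
  ext i
  fin_cases i <;> simp [mulVec, dotProduct, Fin.sum_univ_four]

theorem deltaStar_mulVec :
    (!![-1,-1,0,0; 1,0,0,0; 0,0,0,-1; 0,0,1,-1] : Matrix (Fin 4) (Fin 4) A) *ᵥ v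
      = ![-v 0 - v 1, v 0, -v 3, v 2 - v 3] := by
  ext i
  fin_cases i <;> simp [mulVec, dotProduct, Fin.sum_univ_four] <;> ring

end

theorem stmt_10 (A : Type*) [CommRing A] {G : Type*} [Group G]
    (ρ : G →* Module.End A (Fin 4 → A))
    (c e : G)
    (hρc : ρ c = (!![0,-1,0,0; -1,0,0,0; 0,0,0,-1; 0,0,-1,0] :
      Matrix (Fin 4) (Fin 4) A).mulVecLin)
    (hρe : ρ e = (!![-1,-1,0,0; 1,0,0,0; 0,0,0,-1; 0,0,1,-1] :
      Matrix (Fin 4) (Fin 4) A).mulVecLin)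
    (hrel : c * e ^ 2 * c = e)
    (d : G → (Fin 4 → A))
    (hd : ∀ g g' : G, d (g * g') = d g + ρ g (d g'))
    (ω31 ω32 ω33 ω34 ω41 ω42 ω43 ω44 : A)
    (hdc : d c = ![ω31, ω32, ω33, ω34])
    (hde : d e = ![ω41, ω42, ω43, ω44]) :
    2 * ω31 + ω32 = 2 * ω41 + ω42 ∧ ω33 = ω43 := by
  have hcocycle := map_mul_mul_mul_of_crossedHom ρ d hd c e e c
  rw [mul_assoc c e e, ← pow_two, hrel, hρc, hρe, hdc, hde] at hcocycle
  simp only [Matrix.mulVecLin_apply, gammaStar_mulVec, deltaStar_mulVec] at hcocycle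
  have h₀ := congrFun hcocycle 0
  have h₃ := congrFun hcocycle 3
  simp only [Pi.add_apply, Matrix.cons_val] at h₀ h₃
  exact ⟨by linear_combination -h₀, by linear_combination -h₃⟩
end

section
/- Under the same system of equations (1a)–(5b) and (*) as above, the elements satisfy $\omega_{22} = \omega_{31} = \omega_{32} = -\omega_{21} = -\omega_{42}$ and $2\omega_{22} = 0$. -/
theorem stmt_12_general
    (A : Type*) [CommRing A]
    (ω11 ω12 ω21 ω22 ω31 ω32 ω41 ω42 : A)
    (h1a : ω11 + ω12 = ω31 + ω32)
    (h2a : 2 * ω11 + ω12 = 2 * ω41)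
    (h3b : 2 * ω12 = 2 * ω22)
    (h4a : ω31 - ω32 - ω22 = ω11 + ω21)
    (h4b : ω31 + ω32 - ω21 = ω12 - ω22)
    (h5a : 2 * ω31 + ω32 = 2 * ω41 + ω42)
    (hs1 : ω41 = ω11) (hs2 : ω32 = ω22) :
    ω22 = ω31 ∧ ω31 = ω32 ∧ ω32 = -ω21 ∧ -ω21 = -ω42 ∧ 2 * ω22 = 0 := by
  have hω12 : ω12 = 0 := by linear_combination h2a + 2 * hs1
  have two_ω22 : 2 * ω22 = 0 := by linear_combination -h3b + 2 * hω12
  have hω31 : ω31 = ω11 + ω21 := by linear_combination h4a + hs2 + two_ω22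
  have hω11 : ω11 = ω31 + ω22 := by linear_combination h1a - hω12 + hs2
  have hω22 : ω22 = -ω21 := by linear_combination -hω11 - hω31
  have hω31_eq : ω31 = ω22 := by
    linear_combination h4b + hω12 - hs2 - 2 * two_ω22 + hω22
  have hω42 : ω42 = ω21 := by
    linear_combination -h5a - 2 * hs1 + hs2 - 2 * hω11 - hω22
  exact ⟨hω31_eq.symm, hω31_eq.trans hs2.symm, hs2.trans hω22, by rw [hω42], two_ω22⟩

theorem stmt_12
    (A : Type*) [CommRing A]
    (ω11 ω12 ω13 ω14 ω21 ω22 ω23 ω24 ω31 ω32 ω33 ω34 ω41 ω42 ω43 ω44 : A)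
    (h1a : ω11 + ω12 = ω31 + ω32)
    (h1b : ω13 + ω14 = ω33 + ω34)
    (h2a : 2 * ω11 + ω12 = 2 * ω41)
    (h2b : -ω11 + ω12 = 2 * ω42)
    (h2c : ω13 + ω14 = 2 * ω43)
    (h2d : -ω13 + 2 * ω14 = 2 * ω44)
    (h3a1 : 2 * ω21 = 0) (h3a2 : 2 * ω23 = 0)
    (h3b : 2 * ω12 = 2 * ω22)
    (h3c : 2 * ω14 = 2 * ω24)
    (h4a : ω31 - ω32 - ω22 = ω11 + ω21)
    (h4b : ω31 + ω32 - ω21 = ω12 - ω22)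
    (h4c : ω33 - ω34 - ω24 = ω13 + ω23)
    (h4d : ω33 + ω34 - ω23 = ω14 - ω24)
    (h5a : 2 * ω31 + ω32 = 2 * ω41 + ω42)
    (h5b : ω33 = ω43)
    (hs1 : ω41 = ω11) (hs2 : ω32 = ω22) (hs3 : ω33 = ω13) (hs4 : ω24 = ω44) :
    ω22 = ω31 ∧ ω31 = ω32 ∧ ω32 = -ω21 ∧ -ω21 = -ω42 ∧ 2 * ω22 = 0 :=
  stmt_12_general A ω11 ω12 ω21 ω22 ω31 ω32 ω41 ω42 h1a h2a h3b h4a h4b h5a hs1 hs2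
end

section
/- Under the same system of equations (1a)–(5b) and (*), we have $\omega_{13} = \omega_{14} = \omega_{33} = \omega_{34} = \omega_{43} = 0$. -/
theorem stmt_13_general
    (A : Type*) [CommRing A]
    (ω13 ω14 ω24 ω33 ω34 ω43 ω44 : A)
    (h1b : ω13 + ω14 = ω33 + ω34)
    (h2c : ω13 + ω14 = 2 * ω43)
    (h2d : -ω13 + 2 * ω14 = 2 * ω44)
    (h3c : 2 * ω14 = 2 * ω24)
    (h5b : ω33 = ω43)
    (hs3 : ω33 = ω13) (hs4 : ω24 = ω44) :
    ω13 = 0 ∧ ω14 = 0 ∧ ω33 = 0 ∧ ω34 = 0 ∧ ω43 = 0 := by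
  have h43 : ω43 = ω13 := by linear_combination hs3 - h5b
  have h14 : ω14 = ω13 := by linear_combination h2c + 2 * h43
  have h13_via_2d : ω13 = 2 * ω44 := by linear_combination h2d - 2 * h14
  have two_h13_via_3c : 2 * ω13 = 2 * ω44 := by linear_combination -2 * h14 + h3c + 2 * hs4
  have h13 : ω13 = 0 := by linear_combination two_h13_via_3c - h13_via_2d
  refine ⟨h13, ?_, ?_, ?_, ?_⟩
  · linear_combination h14 + h13
  · linear_combination hs3 + h13
  · linear_combination -h1b - hs3 + h14 + h13
  · linear_combination h43 + h13

theorem stmt_13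
    (A : Type*) [CommRing A]
    (ω11 ω12 ω13 ω14 ω21 ω22 ω23 ω24 ω31 ω32 ω33 ω34 ω41 ω42 ω43 ω44 : A)
    (h1a : ω11 + ω12 = ω31 + ω32)
    (h1b : ω13 + ω14 = ω33 + ω34)
    (h2a : 2 * ω11 + ω12 = 2 * ω41)
    (h2b : -ω11 + ω12 = 2 * ω42)
    (h2c : ω13 + ω14 = 2 * ω43)
    (h2d : -ω13 + 2 * ω14 = 2 * ω44)
    (h3a1 : 2 * ω21 = 0) (h3a2 : 2 * ω23 = 0)
    (h3b : 2 * ω12 = 2 * ω22)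
    (h3c : 2 * ω14 = 2 * ω24)
    (h4a : ω31 - ω32 - ω22 = ω11 + ω21)
    (h4b : ω31 + ω32 - ω21 = ω12 - ω22)
    (h4c : ω33 - ω34 - ω24 = ω13 + ω23)
    (h4d : ω33 + ω34 - ω23 = ω14 - ω24)
    (h5a : 2 * ω31 + ω32 = 2 * ω41 + ω42)
    (h5b : ω33 = ω43)
    (hs1 : ω41 = ω11) (hs2 : ω32 = ω22) (hs3 : ω33 = ω13) (hs4 : ω24 = ω44) :
    ω13 = 0 ∧ ω14 = 0 ∧ ω33 = 0 ∧ ω34 = 0 ∧ ω43 = 0 :=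
  stmt_13_general A ω13 ω14 ω24 ω33 ω34 ω43 ω44 h1b h2c h2d h3c h5b hs3 hs4
end

section
/- Under the full system (1a)–(5b) and (*), every solution is determined by the pair $(\omega_{22}, \omega_{23})$ subject only to $2\omega_{22} = 2\omega_{23} = 0$; explicitly, $\omega_{11} = \omega_{12} = \omega_{13} = \omega_{14} = \omega_{21} + \omega_{22} = \omega_{31} - \omega_{22} = \omega_{32} - \omega_{22} = \omega_{33} = \omega_{34} = \omega_{41} = \omega_{42} + \omega_{22} = \omega_{43} = \omega_{24} - \omega_{23} = \omega_{44} - \omega_{23} = 0$. Conversely, any pair $(\omega_{22}, \omega_{23})$ with $2\omega_{22} = 2\omega_{23} = 0$ yields a solution via these formulas. -/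
/-!
The system splits into two independent systems, one in the unknowns `ωi1, ωi2` and one in the
unknowns `ωi3, ωi4`. In each, once the kernel conditions (*) are substituted, part of the equations
already expresses every unknown as `0` or `±ω22` (resp. `±ω23`) and gives `2 ω22 = 0`; the remaining
equations are redundant. Conversely, as `-ω22 = ω22` and `-ω23 = ω23`, each equation then reduces
to `2 ω22 = 0` or `2 ω23 = 0`.
-/

section

variable {A : Type*} [CommRing A]

theorem columns12_iff (ω11 ω12 ω21 ω22 ω31 ω32 ω41 ω42 : A) :
    (ω11 + ω12 = ω31 + ω32 ∧ 2 * ω11 + ω12 = 2 * ω41 ∧ -ω11 + ω12 = 2 * ω42 ∧ 2 * ω21 = 0 ∧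
      2 * ω12 = 2 * ω22 ∧ ω31 - ω32 - ω22 = ω11 + ω21 ∧ ω31 + ω32 - ω21 = ω12 - ω22 ∧
      2 * ω31 + ω32 = 2 * ω41 + ω42 ∧ ω41 = ω11 ∧ ω32 = ω22) ↔
    (ω11 = 0 ∧ ω12 = 0 ∧ ω21 + ω22 = 0 ∧ ω31 - ω22 = 0 ∧ ω32 - ω22 = 0 ∧ ω41 = 0 ∧
      ω42 + ω22 = 0 ∧ 2 * ω22 = 0) := by
  constructor
  · rintro ⟨h1, h3, -, -, h9, h11, h12, h15, hω41, hω32⟩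
    subst ω41 ω32
    have hω12 : ω12 = 0 := by linear_combination h3
    have h2ω22 : 2 * ω22 = 0 := by linear_combination -h9 + 2 * hω12
    have hω21 : ω21 + ω22 = 0 := by linear_combination -h1 - h11 + hω12 - h2ω22
    have hω31 : ω31 - ω22 = 0 := by linear_combination h12 + hω21 + hω12 - 2 * h2ω22
    have hω11 : ω11 = 0 := by linear_combination h1 + hω31 - hω12 + h2ω22
    have hω42 : ω42 + ω22 = 0 := by linear_combination -h15 + 2 * hω31 - 2 * hω11 + 2 * h2ω22
    exact ⟨hω11, hω12, hω21, hω31, sub_self _, hω11, hω42, h2ω22⟩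
  · grind

theorem columns34_iff (ω13 ω14 ω23 ω24 ω33 ω34 ω43 ω44 : A) :
    (ω13 + ω14 = ω33 + ω34 ∧ ω13 + ω14 = 2 * ω43 ∧ -ω13 + 2 * ω14 = 2 * ω44 ∧ 2 * ω23 = 0 ∧
      2 * ω14 = 2 * ω24 ∧ ω33 - ω34 - ω24 = ω13 + ω23 ∧ ω33 + ω34 - ω23 = ω14 - ω24 ∧
      ω33 = ω43 ∧ ω33 = ω13 ∧ ω24 = ω44) ↔
    (ω13 = 0 ∧ ω14 = 0 ∧ ω33 = 0 ∧ ω34 = 0 ∧ ω43 = 0 ∧ ω24 - ω23 = 0 ∧ ω44 - ω23 = 0 ∧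
      2 * ω23 = 0) := by
  constructor
  · rintro ⟨h2, h5, h6, h8, h10, h13, -, hω43, hω33, hω24⟩
    subst ω43 ω33 ω24
    have hω13 : ω13 = 0 := by linear_combination h10 - h6
    have hω14 : ω14 = 0 := by linear_combination h5 + hω13
    have hω34 : ω34 = 0 := by linear_combination -h2 + hω14
    have hω44 : ω44 - ω23 = 0 := by linear_combination -h13 - hω34 - h8
    exact ⟨hω13, hω14, hω13, hω34, hω13, hω44, hω44, h8⟩
  · grind

end

theorem stmt_15
    (A : Type*) [CommRing A]
    (ω11 ω12 ω13 ω14 ω21 ω22 ω23 ω24 ω31 ω32 ω33 ω34 ω41 ω42 ω43 ω44 : A) :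
    (ω11 + ω12 = ω31 + ω32 ∧
      ω13 + ω14 = ω33 + ω34 ∧
      2 * ω11 + ω12 = 2 * ω41 ∧
      -ω11 + ω12 = 2 * ω42 ∧
      ω13 + ω14 = 2 * ω43 ∧
      -ω13 + 2 * ω14 = 2 * ω44 ∧
      2 * ω21 = 0 ∧ 2 * ω23 = 0 ∧
      2 * ω12 = 2 * ω22 ∧
      2 * ω14 = 2 * ω24 ∧
      ω31 - ω32 - ω22 = ω11 + ω21 ∧
      ω31 + ω32 - ω21 = ω12 - ω22 ∧
      ω33 - ω34 - ω24 = ω13 + ω23 ∧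
      ω33 + ω34 - ω23 = ω14 - ω24 ∧
      2 * ω31 + ω32 = 2 * ω41 + ω42 ∧
      ω33 = ω43 ∧
      ω41 = ω11 ∧ ω32 = ω22 ∧ ω33 = ω13 ∧ ω24 = ω44) ↔
    (ω11 = 0 ∧ ω12 = 0 ∧ ω13 = 0 ∧ ω14 = 0 ∧
      ω21 + ω22 = 0 ∧ ω31 - ω22 = 0 ∧ ω32 - ω22 = 0 ∧
      ω33 = 0 ∧ ω34 = 0 ∧ ω41 = 0 ∧ ω42 + ω22 = 0 ∧ ω43 = 0 ∧
      ω24 - ω23 = 0 ∧ ω44 - ω23 = 0 ∧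
      2 * ω22 = 0 ∧ 2 * ω23 = 0) := by
  constructor
  · rintro ⟨h1, h2, h3, h4, h5, h6, h7, h8, h9, h10, h11, h12, h13, h14, h15, h16, k1, k2, k3, k4⟩
    obtain ⟨g11, g12, g21, g31, g32, g41, g42, g22⟩ :=
      (columns12_iff ω11 ω12 ω21 ω22 ω31 ω32 ω41 ω42).1 ⟨h1, h3, h4, h7, h9, h11, h12, h15, k1, k2⟩
    obtain ⟨g13, g14, g33, g34, g43, g24, g44, g23⟩ :=
      (columns34_iff ω13 ω14 ω23 ω24 ω33 ω34 ω43 ω44).1 ⟨h2, h5, h6, h8, h10, h13, h14, h16, k3, k4⟩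
    exact ⟨g11, g12, g13, g14, g21, g31, g32, g33, g34, g41, g42, g43, g24, g44, g22, g23⟩
  · rintro ⟨g11, g12, g13, g14, g21, g31, g32, g33, g34, g41, g42, g43, g24, g44, g22, g23⟩
    obtain ⟨h1, h3, h4, h7, h9, h11, h12, h15, k1, k2⟩ :=
      (columns12_iff ω11 ω12 ω21 ω22 ω31 ω32 ω41 ω42).2 ⟨g11, g12, g21, g31, g32, g41, g42, g22⟩
    obtain ⟨h2, h5, h6, h8, h10, h13, h14, h16, k3, k4⟩ :=
      (columns34_iff ω13 ω14 ω23 ω24 ω33 ω34 ω43 ω44).2 ⟨g13, g14, g33, g34, g43, g24, g44, g23⟩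
    exact ⟨h1, h2, h3, h4, h5, h6, h7, h8, h9, h10, h11, h12, h13, h14, h15, h16, k1, k2, k3, k4⟩
end
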